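/- Assume in addition that H is invertible and λ ≠ 1. Then the kernel of H̃ equals K + L: a vector x ∈ ℂ^{Nn} satisfies H̃ x = 0 if and only if x ∈ K + L. (Consequently H̃ induces a nondegenerate Hermitian form on the quotient ℂ^{Nn}/(K+L), relative to which the Katz–Long–Moody construction is unitary.) -/

import Mathlib

open Matrix

namespace KLM

variable {k : Type*} [Field k]

/-- Assemble an `Nn × Nn` matrix from an `n × n` array of `N × N` blocks,
blocks being indexed by natural numbers (only indices `< n` are relevant). -/
def blk (n N : ℕ) (B : ℕ → ℕ → Matrix (Fin N) (Fin N) k) :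
    Matrix (Fin n × Fin N) (Fin n × Fin N) k :=
  Matrix.of fun p q => B p.1.1 q.1.1 p.2 q.2

/-- The Dettweiler–Reiter convolution matrix `G_j = ρ^{DR}_λ(x_j)` (0-based index `j`):
the identity except that the `j`-th block row is
`(λ(g_0−1), …, λ(g_{j−1}−1), λ g_j, g_{j+1}−1, …, g_{n−1}−1)`. -/
def G (n N : ℕ) (g : ℕ → Matrix (Fin N) (Fin N) k) (lam : k) (j : ℕ) :
    Matrix (Fin n × Fin N) (Fin n × Fin N) k :=
  blk n N fun r c =>
    if r = j then
      (if c < j then lam • (g c - 1) else if c = j then lam • g j else g c - 1)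
    else if r = c then 1 else 0

/-- The Long–Moody matrix `S_i = ρ^{LM}(σ_i)` (0-based index `i`):
`(s_i ⊕ ⋯ ⊕ s_i) · diag(1, …, 1, R_i, 1, …, 1)` where `R_i` is the
`2×2` block matrix with rows `(0, g_i)` and `(1, 1 − g_{i+1})`
placed in block rows/columns `i, i+1`. -/
def S (n N : ℕ) (g s : ℕ → Matrix (Fin N) (Fin N) k) (i : ℕ) :
    Matrix (Fin n × Fin N) (Fin n × Fin N) k :=
  blk n N fun r c =>
    if r = i ∧ c = i then 0
    else if r = i ∧ c = i + 1 then s i * g i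
    else if r = i + 1 ∧ c = i then s i
    else if r = i + 1 ∧ c = i + 1 then s i * (1 - g (i + 1))
    else if r = c then s i
    else 0

/-- `K = {(w_1,…,w_n) : g_j w_j = w_j for all j}` (blockwise fixed vectors). -/
def Kset (n N : ℕ) (g : ℕ → Matrix (Fin N) (Fin N) k) : Set ((Fin n × Fin N) → k) :=
  {w | ∀ j : Fin n, (g (j : ℕ)).mulVec (fun a => w (j, a)) = fun a => w (j, a)}

/-- The ordered product `G_1 G_2 ⋯ G_n`. -/
def Gprod (n N : ℕ) (g : ℕ → Matrix (Fin N) (Fin N) k) (lam : k) :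
    Matrix (Fin n × Fin N) (Fin n × Fin N) k :=
  ((List.finRange n).map fun j => G n N g lam (j : ℕ)).prod

/-- `L = ker (G_1 G_2 ⋯ G_n − 1)`. -/
def Lset (n N : ℕ) (g : ℕ → Matrix (Fin N) (Fin N) k) (lam : k) :
    Set ((Fin n × Fin N) → k) :=
  {x | (Gprod n N g lam - 1).mulVec x = 0}

/-- The Hermitian matrix `H̃` of the monodromy-invariant form: its `(j,c)` block is
`μ⁻¹ H (g_j⁻¹ − 1)(g_c − 1)` for `j < c`, `μ⁻¹ H (g_j⁻¹ − λ)(g_j − 1)` for `j = c`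
(with `λ = μ²`), and `μ H (g_j⁻¹ − 1)(g_c − 1)` for `j > c`. -/
noncomputable def Ht (n N : ℕ) (g : ℕ → Matrix (Fin N) (Fin N) ℂ) (H : Matrix (Fin N) (Fin N) ℂ)
    (mu : ℂ) : Matrix (Fin n × Fin N) (Fin n × Fin N) ℂ :=
  blk n N fun j c =>
    if j < c then mu⁻¹ • (H * ((g j)⁻¹ - 1) * (g c - 1))
    else if j = c then
      mu⁻¹ • (H * ((g j)⁻¹ - mu ^ 2 • (1 : Matrix (Fin N) (Fin N) ℂ)) * (g j - 1))
    else mu • (H * ((g j)⁻¹ - 1) * (g c - 1))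

section Aux

variable (n N : ℕ) (g : ℕ → Matrix (Fin N) (Fin N) ℂ) (lam : ℂ)

/-- block extraction -/
noncomputable def xb (x : Fin n × Fin N → ℂ) (j : Fin n) : Fin N → ℂ := fun a => x (j, a)

/-- partial sum t_j = ∑_{c<j} (g_c - 1) x_c -/
noncomputable def tp (x : Fin n × Fin N → ℂ) (j : ℕ) : Fin N → ℂ :=
  ∑ c ∈ Finset.univ.filter (fun c : Fin n => (c : ℕ) < j), (g (c : ℕ) - 1) *ᵥ (xb n N x c)

/-- full sum -/
noncomputable def sv (x : Fin n × Fin N → ℂ) : Fin N → ℂ :=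
  ∑ c : Fin n, (g (c : ℕ) - 1) *ᵥ (xb n N x c)

/-- Γ_j = g_{j+1} ⋯ g_{n-1} -/
noncomputable def Gam (j : ℕ) : Matrix (Fin N) (Fin N) ℂ :=
  ((List.range' (j+1) (n - (j+1))).map g).prod

lemma sum_split {M : Type*} [AddCommMonoid M] (m : Fin n) (f : Fin n → M) :
    ∑ c, f c
      = (∑ c ∈ Finset.univ.filter (fun c : Fin n => (c : ℕ) < (m : ℕ)), f c) + (f m
        + ∑ c ∈ Finset.univ.filter (fun c : Fin n => (m : ℕ) < (c : ℕ)), f c) := by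
  rw [← Finset.sum_filter_add_sum_filter_not Finset.univ (fun c : Fin n => (c : ℕ) < (m : ℕ)) f]
  congr 1
  have hset : Finset.univ.filter (fun c : Fin n => ¬ (c : ℕ) < (m : ℕ))
      = insert m (Finset.univ.filter (fun c : Fin n => (m : ℕ) < (c : ℕ))) := by
    ext c
    simp [Fin.ext_iff]
    omega
  rw [hset, Finset.sum_insert (by simp)]

lemma tp_succ (x : Fin n × Fin N → ℂ) (j : Fin n) :
    tp n N g x ((j : ℕ) + 1) = tp n N g x (j : ℕ) + (g (j : ℕ) - 1) *ᵥ (xb n N x j) := by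
  unfold tp
  have hset : Finset.univ.filter (fun c : Fin n => (c : ℕ) < (j : ℕ) + 1)
      = insert j (Finset.univ.filter (fun c : Fin n => (c : ℕ) < (j : ℕ))) := by
    ext c
    simp [Fin.ext_iff]
    omega
  rw [hset, Finset.sum_insert (by simp), add_comm]

lemma tp_top (x : Fin n × Fin N → ℂ) : tp n N g x n = sv n N g x := by
  unfold tp sv
  congr 1
  rw [Finset.filter_true_of_mem]
  exact fun c _ => c.2

lemma sv_split (x : Fin n × Fin N → ℂ) (m : Fin n) :
    sv n N g x = tp n N g x (m : ℕ) + ((g (m : ℕ) - 1) *ᵥ (xb n N x m)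
      + ∑ c ∈ Finset.univ.filter (fun c : Fin n => (m : ℕ) < (c : ℕ)),
          (g (c : ℕ) - 1) *ᵥ (xb n N x c)) := by
  unfold sv tp
  exact sum_split n m _

lemma Gam_last (hn : 0 < n) : Gam n N g (n - 1) = 1 := by
  unfold Gam
  have : n - (n - 1 + 1) = 0 := by omega
  rw [this]
  simp

lemma Gam_succ (j : ℕ) (h : j + 1 < n) : Gam n N g j = g (j + 1) * Gam n N g (j + 1) := by
  unfold Gam
  have h2 : n - (j + 1) = (n - (j + 1 + 1)) + 1 := by omega
  rw [h2, List.range'_succ, List.map_cons, List.prod_cons]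

lemma telescope : ∀ d j, j + d = n - 1 → 0 < n →
    ∑ c ∈ Finset.univ.filter (fun c : Fin n => j < (c : ℕ)),
        (g (c : ℕ) - 1) * Gam n N g (c : ℕ)
      = Gam n N g j - 1 := by
  intro d
  induction d with
  | zero =>
    intro j hj hn
    have hset : Finset.univ.filter (fun c : Fin n => j < (c : ℕ)) = ∅ := by
      ext c
      simp
      omega
    rw [hset, Finset.sum_empty]
    have hj' : j = n - 1 := by omega
    rw [hj', Gam_last n N g hn, sub_self]
  | succ d ih =>
    intro j hj hn
    have hjn : j + 1 < n := by omega
    have hset : Finset.univ.filter (fun c : Fin n => j < (c : ℕ))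
        = insert (⟨j+1, hjn⟩ : Fin n)
            (Finset.univ.filter (fun c : Fin n => j + 1 < (c : ℕ))) := by
      ext c
      simp [Fin.ext_iff]
      omega
    rw [hset, Finset.sum_insert (by simp), ih (j+1) (by omega) hn]
    rw [Gam_succ n N g j hjn]
    noncomm_ring

lemma blk_mulVec (B : ℕ → ℕ → Matrix (Fin N) (Fin N) ℂ) (x : Fin n × Fin N → ℂ)
    (p : Fin n × Fin N) :
    ((blk n N B) *ᵥ x) p
      = (∑ c : Fin n, (B (p.1 : ℕ) (c : ℕ)) *ᵥ (xb n N x c)) p.2 := by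
  simp only [Matrix.mulVec, dotProduct, blk, Matrix.of_apply, Finset.sum_apply,
    Fintype.sum_prod_type, xb]

lemma G_mulVec_ne (j : ℕ) (x : Fin n × Fin N → ℂ) (p : Fin n × Fin N)
    (hp : (p.1 : ℕ) ≠ j) : ((G n N g lam j) *ᵥ x) p = x p := by
  rw [G, blk_mulVec]
  rw [Finset.sum_eq_single p.1]
  · rw [if_neg hp, if_pos rfl, Matrix.one_mulVec]
    rfl
  · intro c _ hc
    rw [if_neg hp, if_neg (fun h => hc (Fin.ext h.symm)), Matrix.zero_mulVec]
  · intro h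
    exact absurd (Finset.mem_univ p.1) h

lemma G_row (j : Fin n) (x : Fin n × Fin N → ℂ) :
    (∑ c : Fin n,
        (if ((j : ℕ) = (j : ℕ)) then
          (if (c : ℕ) < (j : ℕ) then lam • (g (c : ℕ) - 1)
            else if (c : ℕ) = (j : ℕ) then lam • g (j : ℕ) else g (c : ℕ) - 1)
          else if ((j : ℕ) = (c : ℕ)) then 1 else 0) *ᵥ (xb n N x c))
      = lam • tp n N g x (j : ℕ) + (lam • ((g (j : ℕ)) *ᵥ (xb n N x j))
          + ∑ c ∈ Finset.univ.filter (fun c : Fin n => (j : ℕ) < (c : ℕ)),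
              (g (c : ℕ) - 1) *ᵥ (xb n N x c)) := by
  rw [sum_split n j]
  congr 1
  · rw [tp, Finset.smul_sum]
    refine Finset.sum_congr rfl (fun c hc => ?_)
    have h2 := (Finset.mem_filter.mp hc).2
    rw [if_pos rfl, if_pos h2, Matrix.smul_mulVec]
  congr 1
  · rw [if_pos rfl, if_neg (lt_irrefl _), if_pos rfl, Matrix.smul_mulVec]
  · refine Finset.sum_congr rfl (fun c hc => ?_)
    have h2 := (Finset.mem_filter.mp hc).2
    rw [if_pos rfl, if_neg (by omega), if_neg (by omega)]

lemma G_mulVec_eq (j : Fin n) (x : Fin n × Fin N → ℂ) (a : Fin N) :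
    ((G n N g lam (j : ℕ)) *ᵥ x) (j, a)
      = ((lam • tp n N g x (j : ℕ) + (lam • ((g (j : ℕ)) *ᵥ (xb n N x j))
          + ∑ c ∈ Finset.univ.filter (fun c : Fin n => (j : ℕ) < (c : ℕ)),
              (g (c : ℕ) - 1) *ᵥ (xb n N x c)) : Fin N → ℂ)) a := by
  rw [G, blk_mulVec]
  exact congrFun (G_row n N g lam j x) a

noncomputable def Pm (m : ℕ) : Matrix (Fin n × Fin N) (Fin n × Fin N) ℂ :=
  ((List.range' m (n - m)).map (fun j => G n N g lam j)).prod

lemma Pm_top : Pm n N g lam n = 1 := by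
  unfold Pm
  simp

lemma Pm_step (m : ℕ) (h : m < n) :
    Pm n N g lam m = G n N g lam m * Pm n N g lam (m + 1) := by
  unfold Pm
  have h2 : n - m = (n - (m + 1)) + 1 := by omega
  rw [h2, List.range'_succ, List.map_cons, List.prod_cons]

lemma mulVec_sumv {ι : Type*} (s : Finset ι) (A : Matrix (Fin N) (Fin N) ℂ)
    (v : ι → Fin N → ℂ) : A *ᵥ (∑ c ∈ s, v c) = ∑ c ∈ s, A *ᵥ (v c) := by
  ext a
  simp [Matrix.mulVec, dotProduct, Finset.sum_apply, Finset.mul_sum]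
  rw [Finset.sum_comm]

lemma sumM_mulVec {ι : Type*} (s : Finset ι) (M : ι → Matrix (Fin N) (Fin N) ℂ)
    (v : Fin N → ℂ) : (∑ c ∈ s, M c) *ᵥ v = ∑ c ∈ s, (M c) *ᵥ v := by
  ext a
  simp [Matrix.mulVec, dotProduct, Finset.sum_apply, Finset.sum_mul, Matrix.sum_apply]
  rw [Finset.sum_comm]

lemma Pm_mulVec : ∀ d m, m + d = n → ∀ (x : Fin n × Fin N → ℂ) (p : Fin n × Fin N),
    ((Pm n N g lam m) *ᵥ x) p =
      if (p.1 : ℕ) < m then x p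
      else lam * x p + lam * (((Gam n N g (p.1 : ℕ)) *ᵥ (sv n N g x)) p.2) := by
  intro d
  induction d with
  | zero =>
    intro m hm x p
    have hm' : m = n := by omega
    subst hm'
    rw [Pm_top, Matrix.one_mulVec, if_pos p.1.2]
  | succ d ih =>
    intro m hm x p
    rw [Pm_step n N g lam m (by omega), ← Matrix.mulVec_mulVec]
    set y := (Pm n N g lam (m + 1)) *ᵥ x with hy
    have ihy : ∀ q : Fin n × Fin N, y q =
        if (q.1 : ℕ) < m + 1 then x q
        else lam * x q + lam * (((Gam n N g (q.1 : ℕ)) *ᵥ (sv n N g x)) q.2) :=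
      fun q => ih (m + 1) (by omega) x q
    by_cases hp : (p.1 : ℕ) = m
    · obtain ⟨jf, a⟩ := p
      simp only at hp
      subst hp
      rw [G_mulVec_eq n N g lam jf y a, if_neg (lt_irrefl _)]
      have ihb : ∀ (c : Fin n) (b : Fin N), y (c, b) =
          if (c : ℕ) < (jf : ℕ) + 1 then x (c, b)
          else lam * x (c, b) + lam * (((Gam n N g (c : ℕ)) *ᵥ (sv n N g x)) b) :=
        fun c b => ih ((jf : ℕ) + 1) (by omega) x (c, b)
      have h1 : tp n N g y (jf : ℕ) = tp n N g x (jf : ℕ) := by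
        refine Finset.sum_congr rfl (fun c hc => ?_)
        have hcj := (Finset.mem_filter.mp hc).2
        have hxy : xb n N y c = xb n N x c := by
          funext b
          rw [show xb n N y c b = y (c, b) from rfl, ihb c b, if_pos (by omega)]
          rfl
        rw [hxy]
      have h2 : xb n N y jf = xb n N x jf := by
        funext b
        rw [show xb n N y jf b = y (jf, b) from rfl, ihb jf b, if_pos (by omega)]
        rfl
      have h3 : ∀ c : Fin n, (jf : ℕ) < (c : ℕ) →
          xb n N y c = lam • (xb n N x c) + lam • ((Gam n N g (c : ℕ)) *ᵥ (sv n N g x)) := by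
        intro c hc
        funext b
        rw [show xb n N y c b = y (c, b) from rfl, ihb c b, if_neg (by omega)]
        simp [xb]
      have hsum3 : ∑ c ∈ Finset.univ.filter (fun c : Fin n => (jf : ℕ) < (c : ℕ)),
            (g (c : ℕ) - 1) *ᵥ (xb n N y c)
          = lam • (∑ c ∈ Finset.univ.filter (fun c : Fin n => (jf : ℕ) < (c : ℕ)),
                (g (c : ℕ) - 1) *ᵥ (xb n N x c))
            + lam • (((Gam n N g (jf : ℕ)) - 1) *ᵥ (sv n N g x)) := by
        have e1 : ∀ c ∈ Finset.univ.filter (fun c : Fin n => (jf : ℕ) < (c : ℕ)),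
            (g (c : ℕ) - 1) *ᵥ (xb n N y c)
              = lam • ((g (c : ℕ) - 1) *ᵥ (xb n N x c))
                + lam • (((g (c : ℕ) - 1) * Gam n N g (c : ℕ)) *ᵥ (sv n N g x)) := by
          intro c hc
          rw [h3 c (Finset.mem_filter.mp hc).2, Matrix.mulVec_add, Matrix.mulVec_smul,
            Matrix.mulVec_smul, Matrix.mulVec_mulVec]
        rw [Finset.sum_congr rfl e1, Finset.sum_add_distrib, ← Finset.smul_sum,
          ← Finset.smul_sum, ← sumM_mulVec,
          telescope n N g (n - 1 - (jf : ℕ)) (jf : ℕ) (by omega) (by omega)]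
      rw [h1, h2, hsum3]
      have hS : ∑ c ∈ Finset.univ.filter (fun c : Fin n => (jf : ℕ) < (c : ℕ)),
            (g (c : ℕ) - 1) *ᵥ (xb n N x c)
          = sv n N g x - tp n N g x (jf : ℕ) - (g (jf : ℕ) - 1) *ᵥ (xb n N x jf) := by
        rw [sv_split n N g x jf]
        abel
      have hg : (g (jf : ℕ)) *ᵥ (xb n N x jf)
          = (g (jf : ℕ) - 1) *ᵥ (xb n N x jf) + xb n N x jf := by
        rw [Matrix.sub_mulVec, Matrix.one_mulVec]
        abel
      have hGam : ((Gam n N g (jf : ℕ)) - 1) *ᵥ (sv n N g x)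
          = (Gam n N g (jf : ℕ)) *ᵥ (sv n N g x) - sv n N g x := by
        rw [Matrix.sub_mulVec, Matrix.one_mulVec]
      rw [hS, hg, hGam]
      have key : (lam • tp n N g x (jf : ℕ) + (lam • ((g (jf : ℕ) - 1) *ᵥ (xb n N x jf)
            + xb n N x jf)
          + (lam • (sv n N g x - tp n N g x (jf : ℕ) - (g (jf : ℕ) - 1) *ᵥ (xb n N x jf))
            + lam • ((Gam n N g (jf : ℕ)) *ᵥ (sv n N g x) - sv n N g x))) : Fin N → ℂ)
          = lam • (xb n N x jf) + lam • ((Gam n N g (jf : ℕ)) *ᵥ (sv n N g x)) := by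
        module
      rw [key]
      simp [xb]
    · rw [G_mulVec_ne n N g lam m y p hp, ihy p]
      by_cases h2 : (p.1 : ℕ) < m
      · rw [if_pos (by omega), if_pos h2]
      · rw [if_neg (by omega), if_neg h2]

noncomputable def u1 (x : Fin n × Fin N → ℂ) (j : Fin n) : Fin N → ℂ :=
  ∑ c ∈ Finset.univ.filter (fun c : Fin n => (j : ℕ) < (c : ℕ)),
    (g (c : ℕ) - 1) *ᵥ (xb n N x c)

noncomputable def bv (x : Fin n × Fin N → ℂ) (j : Fin n) : Fin N → ℂ :=
  (g (j : ℕ) - 1) *ᵥ (xb n N x j)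

noncomputable def rv (x : Fin n × Fin N → ℂ) (j : Fin n) : Fin N → ℂ :=
  sv n N g x + (lam - 1) • tp n N g x ((j : ℕ) + 1)

noncomputable def qv (x : Fin n × Fin N → ℂ) (j : Fin n) : Fin N → ℂ :=
  lam • ((Gam n N g (j : ℕ)) *ᵥ (sv n N g x))

lemma Ht_mulVec (H : Matrix (Fin N) (Fin N) ℂ) (mu : ℂ) (x : Fin n × Fin N → ℂ)
    (j : Fin n) (a : Fin N) :
    ((Ht n N g H mu) *ᵥ x) (j, a)
      = ((mu⁻¹ • ((H * ((g (j : ℕ))⁻¹ - 1)) *ᵥ (u1 n N g x j))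
          + mu⁻¹ • ((H * ((g (j : ℕ))⁻¹ - mu ^ 2 • 1)) *ᵥ (bv n N g x j))
          + mu • ((H * ((g (j : ℕ))⁻¹ - 1)) *ᵥ (tp n N g x (j : ℕ))) : Fin N → ℂ)) a := by
  rw [Ht, blk_mulVec]
  refine congrFun ?_ a
  rw [sum_split n j (fun c : Fin n =>
    (if ((j : ℕ) < (c : ℕ)) then mu⁻¹ • (H * ((g (j : ℕ))⁻¹ - 1) * (g (c : ℕ) - 1))
      else if ((j : ℕ) = (c : ℕ)) then
        mu⁻¹ • (H * ((g (j : ℕ))⁻¹ - mu ^ 2 • (1 : Matrix (Fin N) (Fin N) ℂ)) * (g (j : ℕ) - 1))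
      else mu • (H * ((g (j : ℕ))⁻¹ - 1) * (g (c : ℕ) - 1))) *ᵥ (xb n N x c))]
  have elow : ∀ c ∈ Finset.univ.filter (fun c : Fin n => (c : ℕ) < (j : ℕ)),
      (if ((j : ℕ) < (c : ℕ)) then mu⁻¹ • (H * ((g (j : ℕ))⁻¹ - 1) * (g (c : ℕ) - 1))
        else if ((j : ℕ) = (c : ℕ)) then
          mu⁻¹ • (H * ((g (j : ℕ))⁻¹ - mu ^ 2 • (1 : Matrix (Fin N) (Fin N) ℂ)) * (g (j : ℕ) - 1))
        else mu • (H * ((g (j : ℕ))⁻¹ - 1) * (g (c : ℕ) - 1))) *ᵥ (xb n N x c)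
        = mu • ((H * ((g (j : ℕ))⁻¹ - 1)) *ᵥ ((g (c : ℕ) - 1) *ᵥ (xb n N x c))) := by
    intro c hc
    have h2 := (Finset.mem_filter.mp hc).2
    rw [if_neg (by omega), if_neg (by omega), Matrix.smul_mulVec,
      ← Matrix.mulVec_mulVec]
  have ehigh : ∀ c ∈ Finset.univ.filter (fun c : Fin n => (j : ℕ) < (c : ℕ)),
      (if ((j : ℕ) < (c : ℕ)) then mu⁻¹ • (H * ((g (j : ℕ))⁻¹ - 1) * (g (c : ℕ) - 1))
        else if ((j : ℕ) = (c : ℕ)) then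
          mu⁻¹ • (H * ((g (j : ℕ))⁻¹ - mu ^ 2 • (1 : Matrix (Fin N) (Fin N) ℂ)) * (g (j : ℕ) - 1))
        else mu • (H * ((g (j : ℕ))⁻¹ - 1) * (g (c : ℕ) - 1))) *ᵥ (xb n N x c)
        = mu⁻¹ • ((H * ((g (j : ℕ))⁻¹ - 1)) *ᵥ ((g (c : ℕ) - 1) *ᵥ (xb n N x c))) := by
    intro c hc
    have h2 := (Finset.mem_filter.mp hc).2
    rw [if_pos h2, Matrix.smul_mulVec, ← Matrix.mulVec_mulVec]
  rw [Finset.sum_congr rfl elow, Finset.sum_congr rfl ehigh,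
    ← Finset.smul_sum, ← Finset.smul_sum, ← mulVec_sumv, ← mulVec_sumv,
    if_neg (lt_irrefl ((j : ℕ))), if_pos rfl, Matrix.smul_mulVec]
  rw [u1, bv, tp, Matrix.mulVec_mulVec]
  abel

lemma unit_mulVec_eq_zero {M : Matrix (Fin N) (Fin N) ℂ} (h : IsUnit M) (v : Fin N → ℂ) :
    M *ᵥ v = 0 ↔ v = 0 := by
  constructor
  · intro hv
    have h2 : M⁻¹ *ᵥ (M *ᵥ v) = 0 := by rw [hv, Matrix.mulVec_zero]
    rwa [Matrix.mulVec_mulVec, Matrix.nonsing_inv_mul _ ((Matrix.isUnit_iff_isUnit_det M).1 h),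
      Matrix.one_mulVec] at h2
  · intro hv
    rw [hv, Matrix.mulVec_zero]

lemma row_iff (mu : ℂ) (hmu0 : mu ≠ 0) (H : Matrix (Fin N) (Fin N) ℂ) (hHu : IsUnit H)
    (x : Fin n × Fin N → ℂ) (j : Fin n) (hgj : IsUnit (g (j : ℕ))) :
    (mu⁻¹ • ((H * ((g (j : ℕ))⁻¹ - 1)) *ᵥ (u1 n N g x j))
      + mu⁻¹ • ((H * ((g (j : ℕ))⁻¹ - mu ^ 2 • 1)) *ᵥ (bv n N g x j))
      + mu • ((H * ((g (j : ℕ))⁻¹ - 1)) *ᵥ (tp n N g x (j : ℕ))) = 0)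
    ↔ ((mu ^ 2 - 1) • bv n N g x j + (g (j : ℕ) - 1) *ᵥ (rv n N g (mu ^ 2) x j) = 0) := by
  have hdet := (Matrix.isUnit_iff_isUnit_det _).1 hgj
  have hginv : g (j : ℕ) * (g (j : ℕ))⁻¹ = 1 := Matrix.mul_nonsing_inv _ hdet
  have h1 : ∀ v : Fin N → ℂ, v = 0 ↔ mu • v = 0 := by
    intro v
    rw [smul_eq_zero]
    simp [hmu0]
  have e1 : mu • (mu⁻¹ • ((H * ((g (j : ℕ))⁻¹ - 1)) *ᵥ (u1 n N g x j))
        + mu⁻¹ • ((H * ((g (j : ℕ))⁻¹ - mu ^ 2 • 1)) *ᵥ (bv n N g x j))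
        + mu • ((H * ((g (j : ℕ))⁻¹ - 1)) *ᵥ (tp n N g x (j : ℕ))))
      = H *ᵥ (((g (j : ℕ))⁻¹ - 1) *ᵥ (u1 n N g x j + (mu ^ 2) • tp n N g x (j : ℕ))
          + ((g (j : ℕ))⁻¹ - mu ^ 2 • 1) *ᵥ (bv n N g x j)) := by
    simp only [Matrix.mulVec_add, Matrix.mulVec_smul, Matrix.mulVec_mulVec]
    match_scalars <;> field_simp <;> ring
  rw [h1, e1, unit_mulVec_eq_zero N hHu, ← unit_mulVec_eq_zero N hgj]
  have m1 : g (j : ℕ) * ((g (j : ℕ))⁻¹ - 1) = 1 - g (j : ℕ) := by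
    rw [Matrix.mul_sub, hginv, Matrix.mul_one]
  have m2 : g (j : ℕ) * ((g (j : ℕ))⁻¹ - mu ^ 2 • 1) = 1 - mu ^ 2 • g (j : ℕ) := by
    rw [Matrix.mul_sub, hginv, Matrix.mul_smul, Matrix.mul_one]
  have e2 : g (j : ℕ) *ᵥ (((g (j : ℕ))⁻¹ - 1) *ᵥ (u1 n N g x j + (mu ^ 2) • tp n N g x (j : ℕ))
        + ((g (j : ℕ))⁻¹ - mu ^ 2 • 1) *ᵥ (bv n N g x j))
      = -((mu ^ 2 - 1) • bv n N g x j + (g (j : ℕ) - 1) *ᵥ (rv n N g (mu ^ 2) x j)) := by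
    simp only [Matrix.mulVec_add, Matrix.mulVec_mulVec, m1, m2]
    rw [rv, sv_split n N g x j, tp_succ n N g x j]
    simp only [bv, u1, Matrix.sub_mulVec, Matrix.one_mulVec, Matrix.smul_mulVec,
      Matrix.mulVec_add, Matrix.mulVec_smul]
    module
  rw [e2, neg_eq_zero]

lemma rq_base (hn : 0 < n) (x : Fin n × Fin N → ℂ) (j : Fin n) (hj : (j : ℕ) = n - 1) :
    rv n N g lam x j = qv n N g lam x j := by
  rw [rv, qv, show (j : ℕ) + 1 = n by omega, tp_top, hj, Gam_last n N g hn,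
    Matrix.one_mulVec]
  module

lemma rv_step (x : Fin n × Fin N → ℂ) (j : Fin n) (hj1 : (j : ℕ) + 1 < n) :
    rv n N g lam x j = rv n N g lam x ⟨(j : ℕ) + 1, hj1⟩
      - (lam - 1) • bv n N g x ⟨(j : ℕ) + 1, hj1⟩ := by
  set j' : Fin n := ⟨(j : ℕ) + 1, hj1⟩
  rw [rv, rv, show ((j' : ℕ)) + 1 = ((j' : ℕ)) + 1 from rfl, tp_succ n N g x j',
    show ((j' : ℕ)) = (j : ℕ) + 1 from rfl]
  simp only [bv]
  module

lemma qv_step (x : Fin n × Fin N → ℂ) (j : Fin n) (hj1 : (j : ℕ) + 1 < n) :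
    qv n N g lam x j = g ((j : ℕ) + 1) *ᵥ qv n N g lam x ⟨(j : ℕ) + 1, hj1⟩ := by
  rw [qv, qv, Matrix.mulVec_smul, Matrix.mulVec_mulVec,
    show ((⟨(j : ℕ) + 1, hj1⟩ : Fin n) : ℕ) = (j : ℕ) + 1 from rfl,
    ← Gam_succ n N g (j : ℕ) hj1]

lemma rq_of_A (hn : 0 < n) (x : Fin n × Fin N → ℂ)
    (hA : ∀ j : Fin n, (lam - 1) • bv n N g x j + (g (j : ℕ) - 1) *ᵥ qv n N g lam x j = 0) :
    ∀ j : Fin n, rv n N g lam x j = qv n N g lam x j := by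
  suffices h : ∀ d (j : Fin n), (j : ℕ) + d = n - 1 → rv n N g lam x j = qv n N g lam x j by
    intro j
    exact h (n - 1 - (j : ℕ)) j (by omega)
  intro d
  induction d with
  | zero =>
    intro j hj
    exact rq_base n N g lam hn x j (by omega)
  | succ d ih =>
    intro j hj
    have hj1 : (j : ℕ) + 1 < n := by omega
    set j' : Fin n := ⟨(j : ℕ) + 1, hj1⟩
    have ihq : rv n N g lam x j' = qv n N g lam x j' := ih j' (by simp [j']; omega)
    have h2 : (lam - 1) • bv n N g x j' = -((g ((j' : ℕ)) - 1) *ᵥ qv n N g lam x j') :=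
      eq_neg_of_add_eq_zero_left (hA j')
    rw [rv_step n N g lam x j hj1, qv_step n N g lam x j hj1, h2, ihq,
      show ((j' : ℕ)) = (j : ℕ) + 1 from rfl, Matrix.sub_mulVec, Matrix.one_mulVec]
    module

lemma rq_of_B (hn : 0 < n) (x : Fin n × Fin N → ℂ)
    (hB : ∀ j : Fin n, (lam - 1) • bv n N g x j + (g (j : ℕ) - 1) *ᵥ rv n N g lam x j = 0) :
    ∀ j : Fin n, rv n N g lam x j = qv n N g lam x j := by
  suffices h : ∀ d (j : Fin n), (j : ℕ) + d = n - 1 → rv n N g lam x j = qv n N g lam x j by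
    intro j
    exact h (n - 1 - (j : ℕ)) j (by omega)
  intro d
  induction d with
  | zero =>
    intro j hj
    exact rq_base n N g lam hn x j (by omega)
  | succ d ih =>
    intro j hj
    have hj1 : (j : ℕ) + 1 < n := by omega
    set j' : Fin n := ⟨(j : ℕ) + 1, hj1⟩
    have ihq : rv n N g lam x j' = qv n N g lam x j' := ih j' (by simp [j']; omega)
    have h2 : (lam - 1) • bv n N g x j' = -((g ((j' : ℕ)) - 1) *ᵥ rv n N g lam x j') :=
      eq_neg_of_add_eq_zero_left (hB j')
    rw [rv_step n N g lam x j hj1, qv_step n N g lam x j hj1, h2, ihq,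
      show ((j' : ℕ)) = (j : ℕ) + 1 from rfl, ← ihq, Matrix.sub_mulVec, Matrix.one_mulVec]
    rw [ihq]
    module

lemma PA_iff_PB (hn : 0 < n) (x : Fin n × Fin N → ℂ) :
    (∀ j : Fin n, (lam - 1) • bv n N g x j + (g (j : ℕ) - 1) *ᵥ qv n N g lam x j = 0)
    ↔ (∀ j : Fin n, (lam - 1) • bv n N g x j + (g (j : ℕ) - 1) *ᵥ rv n N g lam x j = 0) := by
  constructor
  · intro hA j
    rw [rq_of_A n N g lam hn x hA j]
    exact hA j
  · intro hB j
    rw [← rq_of_B n N g lam hn x hB j]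
    exact hB j

lemma flatMap_single {A B : Type*} (l : List A) (f : A → B) :
    (l.flatMap fun a => [f a]) = l.map f := by
  induction l with
  | nil => rfl
  | cons h t ih => simp [List.flatMap_cons, ih]

lemma Gprod_eq : Gprod n N g lam = Pm n N g lam 0 := by
  unfold Gprod Pm
  congr 1
  rw [Nat.sub_zero, ← List.range_eq_range']
  congr 1
  show ((List.finRange n).flatMap fun a => [((a : Fin n) : ℕ)]) = List.range n
  rw [flatMap_single]
  exact List.ext_getElem (by simp) (fun i h1 h2 => by simp)

lemma Gprod_mulVec (x : Fin n × Fin N → ℂ) (j : Fin n) (a : Fin N) :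
    ((Gprod n N g lam - 1) *ᵥ x) (j, a)
      = (lam - 1) * x (j, a) + qv n N g lam x j a := by
  rw [Matrix.sub_mulVec, Matrix.one_mulVec]
  have h := Pm_mulVec n N g lam n 0 (by omega) x (j, a)
  rw [← Gprod_eq] at h
  show (Gprod n N g lam *ᵥ x) (j, a) - x (j, a) = _
  rw [h, if_neg (by omega)]
  simp only [qv, Pi.smul_apply, smul_eq_mul]
  ring

lemma mem_K_iff_PA (x : Fin n × Fin N → ℂ) :
    ((Gprod n N g lam - 1) *ᵥ x ∈ Kset n N g)
    ↔ (∀ j : Fin n, (lam - 1) • bv n N g x j + (g (j : ℕ) - 1) *ᵥ qv n N g lam x j = 0) := by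
  unfold Kset
  simp only [Set.mem_setOf_eq]
  refine forall_congr' (fun j => ?_)
  have hwb : (fun a => ((Gprod n N g lam - 1) *ᵥ x) (j, a))
      = (lam - 1) • xb n N x j + qv n N g lam x j := by
    funext a
    rw [Gprod_mulVec n N g lam x j a]
    simp [xb]
  rw [hwb]
  constructor
  · intro h
    have h2 : (g (j : ℕ) - 1) *ᵥ ((lam - 1) • xb n N x j + qv n N g lam x j) = 0 := by
      rw [Matrix.sub_mulVec, Matrix.one_mulVec, h, sub_self]
    rw [Matrix.mulVec_add, Matrix.mulVec_smul] at h2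
    exact h2
  · intro h
    have h2 : (g (j : ℕ) - 1) *ᵥ ((lam - 1) • xb n N x j + qv n N g lam x j) = 0 := by
      rw [Matrix.mulVec_add, Matrix.mulVec_smul]
      exact h
    rw [Matrix.sub_mulVec, Matrix.one_mulVec, sub_eq_zero] at h2
    exact h2

lemma sv_of_K (u : Fin n × Fin N → ℂ) (hu : u ∈ Kset n N g) : sv n N g u = 0 := by
  unfold sv
  refine Finset.sum_eq_zero (fun c _ => ?_)
  show (g (c : ℕ) - 1) *ᵥ (fun a => u (c, a)) = 0
  rw [Matrix.sub_mulVec, Matrix.one_mulVec, hu c, sub_self]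

lemma GprodK_smul (u : Fin n × Fin N → ℂ) (hu : u ∈ Kset n N g) :
    (Gprod n N g lam - 1) *ᵥ u = (lam - 1) • u := by
  funext p
  obtain ⟨j, a⟩ := p
  rw [Gprod_mulVec n N g lam u j a, qv, sv_of_K n N g u hu, Matrix.mulVec_zero, smul_zero]
  show (lam - 1) * u (j, a) + (0 : Fin N → ℂ) a = ((lam - 1) • u) (j, a)
  simp

lemma K_smul (c : ℂ) (u : Fin n × Fin N → ℂ) (hu : u ∈ Kset n N g) :
    c • u ∈ Kset n N g := by
  intro j
  rw [show (fun a => (c • u) (j, a)) = c • (fun a => u (j, a)) from rfl,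
    Matrix.mulVec_smul, hu j]

lemma decomp_iff (hn : 0 < n) (hlam : lam - 1 ≠ 0) (x : Fin n × Fin N → ℂ) :
    ((Gprod n N g lam - 1) *ᵥ x ∈ Kset n N g)
    ↔ ∃ u ∈ Kset n N g, ∃ v ∈ Lset n N g lam, x = u + v := by
  constructor
  · intro h
    set w := (Gprod n N g lam - 1) *ᵥ x with hw
    have hKu : ((lam - 1)⁻¹ • w) ∈ Kset n N g := K_smul n N g _ w h
    refine ⟨(lam - 1)⁻¹ • w, hKu, x - (lam - 1)⁻¹ • w, ?_, by abel⟩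
    show (Gprod n N g lam - 1) *ᵥ (x - (lam - 1)⁻¹ • w) = 0
    have h2 : (Gprod n N g lam - 1) *ᵥ ((lam - 1)⁻¹ • w) = w := by
      rw [GprodK_smul n N g lam _ hKu, smul_smul, mul_inv_cancel₀ hlam, one_smul]
    rw [Matrix.mulVec_sub, h2, ← hw, sub_self]
  · rintro ⟨u, hu, v, hv, rfl⟩
    have hv' : (Gprod n N g lam - 1) *ᵥ v = 0 := hv
    rw [Matrix.mulVec_add, GprodK_smul n N g lam u hu, hv', add_zero]
    exact K_smul n N g _ u hu

end Aux

/-- If moreover `H` is invertible and `λ = μ² ≠ 1`, then the kernel of `H̃`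
is exactly `K + L`; consequently `H̃` induces a nondegenerate Hermitian form on
`ℂ^{Nn}/(K+L)`, relative to which the Katz–Long–Moody construction is unitary. -/

theorem ker_Ht_eq_K_add_L
    (N n : ℕ) (hN : 1 ≤ N) (hn : 2 ≤ n)
    (g : ℕ → Matrix (Fin N) (Fin N) ℂ)
    (hgu : ∀ j, j < n → IsUnit (g j))
    (mu : ℂ) (hmu : ‖mu‖ = 1)
    (H : Matrix (Fin N) (Fin N) ℂ) (hH : Hᴴ = H)
    (hunit : ∀ j, j < n → (g j)ᴴ * H * g j = H)
    (hHu : IsUnit H) (hl : mu ^ 2 ≠ 1) :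
    ∀ x : (Fin n × Fin N) → ℂ,
      (Ht n N g H mu).mulVec x = 0 ↔
        ∃ u ∈ Kset n N g, ∃ v ∈ Lset n N g (mu ^ 2), x = u + v := by
  intro x
  have hmu0 : mu ≠ 0 := by
    intro h
    rw [h] at hmu
    simp at hmu
  have hn0 : 0 < n := by omega
  have hlam : mu ^ 2 - 1 ≠ 0 := sub_ne_zero.mpr hl
  have step1 : (Ht n N g H mu).mulVec x = 0 ↔
      ∀ j : Fin n, (mu ^ 2 - 1) • bv n N g x j
        + (g (j : ℕ) - 1) *ᵥ rv n N g (mu ^ 2) x j = 0 := by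
    constructor
    · intro h j
      refine (row_iff n N g mu hmu0 H hHu x j (hgu _ j.2)).1 ?_
      funext a
      have h2 := congrFun h (j, a)
      rw [Ht_mulVec n N g H mu x j a] at h2
      exact h2
    · intro h
      funext p
      obtain ⟨j, a⟩ := p
      rw [Ht_mulVec n N g H mu x j a,
        (row_iff n N g mu hmu0 H hHu x j (hgu _ j.2)).2 (h j)]
      rfl
  rw [step1, ← PA_iff_PB n N g (mu ^ 2) hn0 x, ← mem_K_iff_PA n N g (mu ^ 2) x,
    decomp_iff n N g (mu ^ 2) hn0 hlam x]

end KLM
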